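/- arXiv:1708.05755 — 3 statements merged into one kernel-verified Lean document; each statement's English description precedes it below -/
import Mathlib

section
/- If K is a periodic orbit of a continuous map f on a compact metric space and x is a point whose ω-limit set equals K, then x is mean-attracted to K: for every ε > 0 there exists z ∈ K with limsup_{N→∞} (1/N) Σ_{n=1}^{N} d(fⁿx, fⁿz) < ε. -/
/-!
By compactness, an orbit whose ω-limit set is the finite invariant set `K` eventually stays in
every neighbourhood of `K`. Let `r` separate the points of `K`. Once the orbit is so close to
`K` that uniform continuity of `f` moves the nearest point of `K` by less than `r / 2`, the
point of `K` shadowed at time `n + 1` must be the image of the one shadowed at time `n`; so from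
then on the orbit of `x` shadows a single orbit `fⁿ z` in `K`, and the separation of `K` forces
`dist (fⁿ x) (fⁿ z) → 0`. The Cesàro means of a null sequence tend to `0`.
-/

open Filter Set Topology Metric

theorem Set.Finite.exists_pos_pairwise_lt_dist {X : Type*} [MetricSpace X] {K : Set X}
    (hK : K.Finite) : ∃ r > 0, K.Pairwise fun a b => r < dist a b := by
  have hsmall : ∀ᶠ r in 𝓝[>] (0 : ℝ), ∀ q ∈ K ×ˢ K \ diagonal X, r < dist q.1 q.2 :=
    (hK.prod hK).sdiff.eventually_all.2 fun q hq =>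
      nhdsWithin_le_nhds (eventually_lt_nhds (dist_pos.2 hq.2))
  obtain ⟨r, hr, hpos⟩ := (hsmall.and self_mem_nhdsWithin).exists
  exact ⟨r, hpos, fun a ha b hb hab => hr (a, b) ⟨⟨ha, hb⟩, hab⟩⟩

theorem eventually_mem_of_iInter_closure_tail_subset {X : Type*} [TopologicalSpace X]
    [CompactSpace X] {u : ℕ → X} {U : Set X} (hU : IsOpen U)
    (h : ⋂ n, closure (u '' Ici n) ⊆ U) : ∀ᶠ n in atTop, u n ∈ U := by
  by_contra hfreq
  obtain ⟨a, haU, ha⟩ :=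
    hU.isClosed_compl.isCompact.exists_mapClusterPt_of_frequently (not_eventually.mp hfreq)
  exact haU (h (mem_iInter.2 (mapClusterPt_atTop_iff_forall_mem_closure.1 ha)))

theorem Filter.Tendsto.cesaro_Icc {u : ℕ → ℝ} {l : ℝ} (h : Tendsto u atTop (𝓝 l)) :
    Tendsto (fun N : ℕ => (∑ n ∈ Finset.Icc 1 N, u n) / N) atTop (𝓝 l) := by
  refine ((tendsto_add_atTop_iff_nat 1).2 h).cesaro.congr fun N => ?_
  rw [inv_mul_eq_div, ← Finset.Ico_add_one_right_eq_Icc, Finset.sum_Ico_eq_sum_range]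
  simp only [add_tsub_cancel_right, add_comm 1]

section
variable {X : Type*} [PseudoMetricSpace X] {f : X → X} {K : Set X} {r : ℝ}

theorem eq_iterate_of_forall_dist_iterate_lt (hmaps : MapsTo f K K)
    (hsep : K.Pairwise fun a b => r < dist a b) {η : ℝ} (hηr : η ≤ r / 2)
    (hfη : ∀ ⦃a b⦄, dist a b < η → dist (f a) (f b) < r / 2) {x : X} {c : ℕ → X}
    (hcK : ∀ n, c n ∈ K) (hc : ∀ n, dist (f^[n] x) (c n) < η) (n : ℕ) :
    c n = f^[n] (c 0) := by
  have hstep : ∀ n, c (n + 1) = f (c n) := fun n => by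
    by_contra hne
    have hfar := hsep (hcK (n + 1)) (hmaps (hcK n)) hne
    have hnext : dist (f^[n + 1] x) (f (c n)) < r / 2 := by
      rw [Function.iterate_succ_apply']
      exact hfη (hc n)
    linarith [hc (n + 1), dist_triangle_left (c (n + 1)) (f (c n)) (f^[n + 1] x)]
  induction n with
  | zero => rfl
  | succ n ih => rw [hstep, ih, Function.iterate_succ_apply']

theorem tendsto_dist_of_forall_dist_lt_half (hsep : K.Pairwise fun a b => r < dist a b)
    {u c : ℕ → X} (hcK : ∀ n, c n ∈ K) (hc : ∀ n, dist (u n) (c n) < r / 2)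
    (hnear : ∀ δ > 0, ∀ᶠ n in atTop, ∃ k ∈ K, dist (u n) k < δ) :
    Tendsto (fun n => dist (u n) (c n)) atTop (𝓝 0) := by
  refine Metric.tendsto_nhds.2 fun δ hδ => ?_
  have hr : 0 < r := by linarith [dist_nonneg.trans_lt (hc 0)]
  filter_upwards [hnear (min δ (r / 2)) (by positivity)] with n ⟨k, hkK, hk⟩
  obtain rfl : k = c n := by
    by_contra hne
    linarith [hsep hkK (hcK n) hne, dist_triangle_left k (c n) (u n), hc n, min_le_right δ (r / 2)]
  simpa [abs_of_nonneg dist_nonneg] using hk.trans_le (min_le_left _ _)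

end

theorem exists_mem_tendsto_dist_iterate_of_iInter_closure_subset {X : Type*} [MetricSpace X]
    [CompactSpace X] {f : X → X} (hf : Continuous f) {K : Set X} (hKfin : K.Finite)
    (hKinv : f '' K = K) {x : X}
    (hω : ⋂ n, closure ((fun k => f^[k] x) '' Ici n) ⊆ K) :
    ∃ z ∈ K, Tendsto (fun n => dist (f^[n] x) (f^[n] z)) atTop (𝓝 0) := by
  obtain ⟨r, hr, hsep⟩ := hKfin.exists_pos_pairwise_lt_dist
  obtain ⟨η, hη, hfη⟩ := uniformContinuous_iff.1
    (CompactSpace.uniformContinuous_of_continuous hf) (r / 2) (half_pos hr)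
  have hnear : ∀ δ > 0, ∀ᶠ n in atTop, ∃ k ∈ K, dist (f^[n] x) k < δ := fun δ hδ =>
    (eventually_mem_of_iInter_closure_tail_subset isOpen_thickening
      (hω.trans (self_subset_thickening hδ K))).mono fun _ => mem_thickening_iff.1
  obtain ⟨N, hN⟩ := eventually_atTop.1 (hnear (min η (r / 2)) (by positivity))
  have : Nonempty X := ⟨x⟩
  choose! c hcK hc using hN
  have hlock (n : ℕ) : c (n + N) = f^[n] (c N) := by
    simpa using eq_iterate_of_forall_dist_iterate_lt (mapsTo_iff_image_subset.2 hKinv.le) hsep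
      (min_le_right η _) (fun _ _ h => hfη (h.trans_le (min_le_left _ _)))
      (x := f^[N] x) (c := fun n => c (n + N)) (fun n => hcK _ (Nat.le_add_left N n))
      (fun n => by simpa [← Function.iterate_add_apply] using hc _ (Nat.le_add_left N n)) n
  obtain ⟨z, hzK, hz⟩ := (show SurjOn f K K from hKinv.ge).iterate N (hcK N le_rfl)
  refine ⟨z, hzK, (tendsto_add_atTop_iff_nat N).1 ?_⟩
  have horbit (n : ℕ) : f^[n + N] z = c (n + N) := by rw [Function.iterate_add_apply, hz, hlock]
  simp only [horbit]
  exact tendsto_dist_of_forall_dist_lt_half hsep (fun n => hcK _ (Nat.le_add_left N n))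
    (fun n => (hc _ (Nat.le_add_left N n)).trans_le (min_le_right _ _))
    (fun δ hδ => (tendsto_add_atTop_nat N).eventually (hnear δ hδ))

theorem image_range_eq_of_cycle {X : Type*} {f : X → X} {m : ℕ} (hm : 0 < m) {p : Fin m → X}
    (hcycle : ∀ i : Fin m, f (p i) = p ⟨(i.val + 1) % m, Nat.mod_lt _ hm⟩) :
    f '' range p = range p := by
  have : NeZero m := NeZero.of_pos hm
  have hσ : f ∘ p = p ∘ (· + 1) :=
    funext fun i => (hcycle i).trans (congrArg p (by ext; simp [Fin.val_add, Nat.add_mod]))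
  rw [← range_comp, hσ, (add_right_surjective 1).range_comp]

theorem periodic_orbit_mean_attracted_general {X : Type*} [MetricSpace X] [CompactSpace X]
    (f : X → X) (hf : Continuous f) (m : ℕ) (hm : 0 < m)
    (p : Fin m → X)
    (hcycle : ∀ i : Fin m, f (p i) = p ⟨(i.val + 1) % m, Nat.mod_lt _ hm⟩)
    (x : X)
    (homega : (⋂ n : ℕ, closure ((fun k : ℕ => f^[k] x) '' Set.Ici n)) = Set.range p) :
    ∀ ε > (0 : ℝ), ∃ z ∈ Set.range p,
      limsup (fun N : ℕ => (∑ n ∈ Finset.Icc 1 N, dist (f^[n] x) (f^[n] z)) / N) atTop < ε := by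
  intro ε hε
  obtain ⟨z, hz, hasymp⟩ := exists_mem_tendsto_dist_iterate_of_iInter_closure_subset hf
    (finite_range p) (image_range_eq_of_cycle hm hcycle) homega.subset
  exact ⟨z, hz, hasymp.cesaro_Icc.limsup_eq.trans_lt hε⟩

/-- If `K` is a finite periodic orbit of a continuous map `f` on a compact metric space
and `x` has ω-limit set equal to `K`, then `x` is mean-attracted to `K`: for every
`ε > 0` there is `z ∈ K` with `limsup_{N→∞} (1/N) Σ_{n=1}^{N} d(fⁿx, fⁿz) < ε`. -/
theorem periodic_orbit_mean_attracted {X : Type*} [MetricSpace X] [CompactSpace X]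
    (f : X → X) (hf : Continuous f) (m : ℕ) (hm : 0 < m)
    (p : Fin m → X) (hinj : Function.Injective p)
    (hcycle : ∀ i : Fin m, f (p i) = p ⟨(i.val + 1) % m, Nat.mod_lt _ hm⟩)
    (x : X)
    (homega : (⋂ n : ℕ, closure ((fun k : ℕ => f^[k] x) '' Set.Ici n)) = Set.range p) :
    ∀ ε > (0 : ℝ), ∃ z ∈ Set.range p,
      limsup (fun N : ℕ => (∑ n ∈ Finset.Icc 1 N, dist (f^[n] x) (f^[n] z)) / N) atTop < ε :=
  periodic_orbit_mean_attracted_general f hf m hm p hcycle x homega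
end

section
/- If a continuous map f on a compact interval I has a periodic point of period 3, then f has positive topological entropy; equivalently, an interval map with zero topological entropy has no periodic point of period 3. -/
/-!
Order the orbit of the period-three point as `x₁ < x₂ < x₃`. By the intermediate value theorem,
`f²` maps each of `[x₁, x₂]` and `[x₂, x₃]` onto a set containing `[x₁, x₃]`. These two intervals
share the endpoint `x₂`; passing to `f⁴` yields two disjoint closed intervals, each of whose
images covers both. Following the `2ⁿ` itineraries through this horseshoe gives `2ⁿ` orbit
segments of length `4n` that are pairwise `ε`-separated, so the entropy is at least `log 2 / 4`.
-/

open Dynamics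

open Set Function Uniformity ExpGrowth

theorem subset_image_iterate_itinerary {α ι : Type*} {T : α → α} {A : ι → Set α}
    (hA : ∀ i j, A j ⊆ T '' A i) (w : ℕ → ι) (n : ℕ) :
    A (w n) ⊆ T^[n] '' {x | ∀ i ≤ n, T^[i] x ∈ A (w i)} := by
  induction n with
  | zero =>
    intro y hy
    exact ⟨y, fun i hi => by rwa [Nat.le_zero.1 hi], rfl⟩
  | succ n ih =>
    rintro y hy
    obtain ⟨z, hz, rfl⟩ := hA (w n) (w (n + 1)) hy
    obtain ⟨x, hx, rfl⟩ := ih hz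
    refine ⟨x, fun i hi => ?_, iterate_succ_apply' T n x⟩
    rcases Nat.of_le_succ hi with hi | rfl
    · exact hx i hi
    · rwa [iterate_succ_apply']

namespace Dynamics

variable {X : Type*} [PseudoMetricSpace X] {T : X → X} {F A₀ A₁ : Set X}

lemma isDynNetIn_of_pairwise_le_dist {s : Set X} {ε : ℝ} {n : ℕ} (hsF : s ⊆ F)
    (hs : s.Pairwise fun x y => ∃ m < n, ε ≤ dist (T^[m] x) (T^[m] y)) :
    IsDynNetIn T F {p | dist p.1 p.2 < ε / 2} n s := by
  refine ⟨hsF, fun x hx y hy hxy => disjoint_left.2 fun z hzx hzy => ?_⟩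
  obtain ⟨m, hm, hε⟩ := hs hx hy hxy
  have hx' : dist (T^[m] x) (T^[m] z) < ε / 2 := mem_ball_dynEntourage.1 hzx m hm
  have hy' : dist (T^[m] y) (T^[m] z) < ε / 2 := mem_ball_dynEntourage.1 hzy m hm
  linarith [dist_triangle_right (T^[m] x) (T^[m] y) (T^[m] z)]

structure IsHorseshoe (T : X → X) (A₀ A₁ : Set X) : Prop where
  nonempty : A₀.Nonempty
  subset_image_left : A₀ ∪ A₁ ⊆ T '' A₀
  subset_image_right : A₀ ∪ A₁ ⊆ T '' A₁
  exists_le_dist : ∃ ε > 0, ∀ x ∈ A₀, ∀ y ∈ A₁, ε ≤ dist x y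

namespace IsHorseshoe

lemma ne_id (h : IsHorseshoe T A₀ A₁) : T ≠ id := by
  rintro rfl
  obtain ⟨x, hx⟩ := h.nonempty
  obtain ⟨ε, hε, hsep⟩ := h.exists_le_dist
  have hx₁ : x ∈ A₁ := by simpa using h.subset_image_right (Or.inl hx)
  linarith [hsep x hx x hx₁, dist_self x]

lemma iterate_ne_zero {k : ℕ} (h : IsHorseshoe (T^[k]) A₀ A₁) : k ≠ 0 :=
  fun hk => h.ne_id (by rw [hk, iterate_zero])

lemma exists_two_pow_le_netMaxcard {k : ℕ} (h : IsHorseshoe (T^[k]) A₀ A₁) (hF : A₀ ∪ A₁ ⊆ F) :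
    ∃ U ∈ 𝓤 X, ∀ n, (2 ^ n : ℕ∞) ≤ netMaxcard T F U (k * n) := by
  classical
  obtain ⟨ε, hε, hsep⟩ := h.exists_le_dist
  refine ⟨_, Metric.dist_mem_uniformity (half_pos hε), fun n => ?_⟩
  have hk : 0 < k := Nat.pos_of_ne_zero h.iterate_ne_zero
  set A : Bool → Set X := fun i => cond i A₁ A₀
  have hA : ∀ i j, A j ⊆ T^[k] '' A i := by
    intro i j
    cases i <;> cases j
    exacts [subset_union_left.trans h.subset_image_left,
      subset_union_right.trans h.subset_image_left,
      subset_union_left.trans h.subset_image_right,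
      subset_union_right.trans h.subset_image_right]
  have hAF : ∀ i, A i ⊆ F := by
    intro i
    cases i
    exacts [subset_union_left.trans hF, subset_union_right.trans hF]
  have hAne : ∀ i, (A i).Nonempty := by
    intro i
    cases i
    · exact h.nonempty
    · obtain ⟨x, hx⟩ := h.nonempty
      obtain ⟨y, hy, -⟩ := h.subset_image_right (Or.inl hx)
      exact ⟨y, hy⟩
  have hfar : ∀ i j, i ≠ j → ∀ x ∈ A i, ∀ y ∈ A j, ε ≤ dist x y := by
    intro i j hij x hx y hy
    cases i <;> cases j
    exacts [absurd rfl hij, hsep x hx y hy, dist_comm x y ▸ hsep y hy x hx, absurd rfl hij]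
  have hpt : ∀ w : Fin n → Bool, ∃ x ∈ F, ∀ i : Fin n, T^[k * i] x ∈ A (w i) := by
    intro w
    set w' : ℕ → Bool := fun i => if hi : i < n then w ⟨i, hi⟩ else false
    obtain ⟨y, hy⟩ := hAne (w' n)
    obtain ⟨x, hx, -⟩ := subset_image_iterate_itinerary hA w' n hy
    refine ⟨x, hAF _ (hx 0 n.zero_le), fun i => ?_⟩
    simpa [iterate_mul, w'] using hx i i.is_lt.le
  choose Φ hΦF hΦ using hpt
  have hpair : ∀ w w', w ≠ w' → ∃ m < k * n, ε ≤ dist (T^[m] (Φ w)) (T^[m] (Φ w')) := by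
    intro w w' hww'
    obtain ⟨i, hi⟩ := ne_iff.1 hww'
    exact ⟨k * i, Nat.mul_lt_mul_of_pos_left i.is_lt hk, hfar _ _ hi _ (hΦ w i) _ (hΦ w' i)⟩
  have hinj : Injective Φ := by
    intro w w' hΦw
    by_contra hww'
    obtain ⟨m, -, hm⟩ := hpair w w' hww'
    rw [hΦw, dist_self] at hm
    exact hε.not_ge hm
  have hnet : IsDynNetIn T F {p | dist p.1 p.2 < ε / 2} (k * n) (Finset.univ.image Φ : Set X) := by
    rw [Finset.coe_image, Finset.coe_univ, image_univ]
    refine isDynNetIn_of_pairwise_le_dist (range_subset_iff.2 hΦF) ?_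
    rintro _ ⟨w, rfl⟩ _ ⟨w', rfl⟩ hne
    exact hpair w w' (ne_of_apply_ne Φ hne)
  calc (2 ^ n : ℕ∞) = (Finset.univ.image Φ).card := by
        rw [Finset.card_image_of_injective _ hinj]; simp
    _ ≤ netMaxcard T F _ (k * n) := hnet.card_le_netMaxcard

lemma coverEntropy_pos {k : ℕ} (h : IsHorseshoe (T^[k]) A₀ A₁) (hF : A₀ ∪ A₁ ⊆ F) :
    0 < coverEntropy T F := by
  obtain ⟨U, hU, hcount⟩ := h.exists_two_pow_le_netMaxcard hF
  have hmono : Monotone fun n => (netMaxcard T F U n : ENNReal) :=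
    fun m n hmn => ENat.toENNReal_le.2 (netMaxcard_monotone_time T F U hmn)
  have key : ENNReal.log 2 ≤ k * netEntropyEntourage T F U := calc
    ENNReal.log 2 = expGrowthSup fun n => 2 ^ n := expGrowthSup_pow.symm
    _ ≤ expGrowthSup fun n => (netMaxcard T F U (k * n) : ENNReal) :=
      expGrowthSup_monotone fun n => by simpa using ENat.toENNReal_le.2 (hcount n)
    _ = k * netEntropyEntourage T F U := hmono.expGrowthSup_comp_mul h.iterate_ne_zero
  have hlog : (0 : EReal) < ENNReal.log 2 := by
    rw [ENNReal.log_pos_real (by norm_num) (by norm_num)]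
    exact_mod_cast Real.log_pos one_lt_two
  rcases EReal.mul_pos_iff.1 (hlog.trans_le key) with ⟨-, hpos⟩ | ⟨hneg, -⟩
  · exact hpos.trans_le (netEntropyEntourage_le_coverEntropy T F hU)
  · exact absurd hneg (by simp)

end IsHorseshoe

end Dynamics

lemma subset_image_iterate_two {α : Type*} {f : α → α} {J L M : Set α} (hLJ : L ⊆ J)
    (hL : J ⊆ f '' L) (hM : L ⊆ f '' M) : J ⊆ f^[2] '' L ∧ J ⊆ f^[2] '' M := by
  rw [show f^[2] = f ∘ f from rfl, image_comp, image_comp]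
  exact ⟨hL.trans (image_mono (hLJ.trans hL)), hL.trans (image_mono hM)⟩

lemma Icc_subset_image_iterate_two_of_three_cycle {f : ℝ → ℝ} {x₁ x₂ x₃ : ℝ}
    (hf : ContinuousOn f (Icc x₁ x₃)) (h₁₂ : x₁ < x₂) (h₂₃ : x₂ < x₃)
    (hcyc : (f x₁ = x₂ ∧ f x₂ = x₃ ∧ f x₃ = x₁) ∨ (f x₁ = x₃ ∧ f x₂ = x₁ ∧ f x₃ = x₂)) :
    Icc x₁ x₃ ⊆ f^[2] '' Icc x₁ x₂ ∧ Icc x₁ x₃ ⊆ f^[2] '' Icc x₂ x₃ := by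
  have hf₁ : ContinuousOn f (Icc x₁ x₂) := hf.mono (Icc_subset_Icc_right h₂₃.le)
  have hf₂ : ContinuousOn f (Icc x₂ x₃) := hf.mono (Icc_subset_Icc_left h₁₂.le)
  rcases hcyc with ⟨e₁, e₂, e₃⟩ | ⟨e₁, e₂, e₃⟩
  · have hL : Icc x₁ x₃ ⊆ f '' Icc x₂ x₃ := by
      simpa only [e₂, e₃] using intermediate_value_Icc' h₂₃.le hf₂
    have hM : Icc x₂ x₃ ⊆ f '' Icc x₁ x₂ := by
      simpa only [e₁, e₂] using intermediate_value_Icc h₁₂.le hf₁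
    exact (subset_image_iterate_two (Icc_subset_Icc_left h₁₂.le) hL hM).symm
  · have hL : Icc x₁ x₃ ⊆ f '' Icc x₁ x₂ := by
      simpa only [e₁, e₂] using intermediate_value_Icc' h₁₂.le hf₁
    have hM : Icc x₁ x₂ ⊆ f '' Icc x₂ x₃ := by
      simpa only [e₂, e₃] using intermediate_value_Icc h₂₃.le hf₂
    exact subset_image_iterate_two (Icc_subset_Icc_right h₂₃.le) hL hM

lemma exists_isHorseshoe_iterate_two {g : ℝ → ℝ} {y₁ y₂ y₃ : ℝ} (hg : ContinuousOn g (Icc y₁ y₃))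
    (h₁₂ : y₁ < y₂) (h₂₃ : y₂ < y₃)
    (hA : Icc y₁ y₃ ⊆ g '' Icc y₁ y₂) (hB : Icc y₁ y₃ ⊆ g '' Icc y₂ y₃) :
    ∃ A₀ A₁, A₀ ∪ A₁ ⊆ Icc y₁ y₃ ∧ IsHorseshoe (g^[2]) A₀ A₁ := by
  obtain ⟨c, d, hcd, hc, hd, hgc, hgd, hcov⟩ : ∃ c d, c ≤ d ∧ y₁ ≤ c ∧ d ≤ y₃ ∧
      g y₂ ≠ c ∧ g y₂ ≠ d ∧ Icc y₁ y₃ ⊆ g '' Icc c d := by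
    by_cases h₁ : g y₂ = y₁
    · exact ⟨y₂, y₃, h₂₃.le, h₁₂.le, le_rfl, by linarith, by linarith, hB⟩
    by_cases h₃ : g y₂ = y₃
    · exact ⟨y₁, y₂, h₁₂.le, le_rfl, h₂₃.le, by linarith, by linarith, hA⟩
    exact ⟨y₁, y₃, (h₁₂.trans h₂₃).le, le_rfl, le_rfl, h₁, h₃,
      hA.trans (image_mono (Icc_subset_Icc_right h₂₃.le))⟩
  -- Preimages of `c` and `d` avoid `y₂`, so they lie strictly on one side of it.
  have hleft : ∀ e ∈ Icc y₁ y₃, g y₂ ≠ e → ∃ u ∈ Ico y₁ y₂, g u = e := by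
    rintro e he hne
    obtain ⟨u, hu, rfl⟩ := hA he
    exact ⟨u, ⟨hu.1, hu.2.lt_of_ne (by rintro rfl; exact hne rfl)⟩, rfl⟩
  have hright : ∀ e ∈ Icc y₁ y₃, g y₂ ≠ e → ∃ v ∈ Ioc y₂ y₃, g v = e := by
    rintro e he hne
    obtain ⟨v, hv, rfl⟩ := hB he
    exact ⟨v, ⟨hv.1.lt_of_ne (by rintro rfl; exact hne rfl), hv.2⟩, rfl⟩
  have hcover : ∀ u v, uIcc u v ⊆ Icc y₁ y₃ → g u = c → g v = d →
      Icc y₁ y₃ ⊆ g^[2] '' uIcc u v := by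
    intro u v huv hu hv
    have himage : Icc c d ⊆ g '' uIcc u v := by
      simpa only [hu, hv, uIcc_of_le hcd] using intermediate_value_uIcc (hg.mono huv)
    rw [show g^[2] = g ∘ g from rfl, image_comp]
    exact hcov.trans (image_mono himage)
  have hcJ : c ∈ Icc y₁ y₃ := ⟨hc, hcd.trans hd⟩
  have hdJ : d ∈ Icc y₁ y₃ := ⟨hc.trans hcd, hd⟩
  obtain ⟨u₁, hu₁, hgu₁⟩ := hleft c hcJ hgc
  obtain ⟨u₂, hu₂, hgu₂⟩ := hleft d hdJ hgd
  obtain ⟨v₁, hv₁, hgv₁⟩ := hright c hcJ hgc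
  obtain ⟨v₂, hv₂, hgv₂⟩ := hright d hdJ hgd
  have hA₀ : uIcc u₁ u₂ ⊆ Icc y₁ y₃ :=
    uIcc_subset_Icc ⟨hu₁.1, hu₁.2.le.trans h₂₃.le⟩ ⟨hu₂.1, hu₂.2.le.trans h₂₃.le⟩
  have hA₁ : uIcc v₁ v₂ ⊆ Icc y₁ y₃ :=
    uIcc_subset_Icc ⟨h₁₂.le.trans hv₁.1.le, hv₁.2⟩ ⟨h₁₂.le.trans hv₂.1.le, hv₂.2⟩
  have hgap : max u₁ u₂ < min v₁ v₂ :=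
    (max_lt hu₁.2 hu₂.2).trans (lt_min hv₁.1 hv₂.1)
  refine ⟨uIcc u₁ u₂, uIcc v₁ v₂, union_subset hA₀ hA₁,
    ⟨nonempty_uIcc, ?_, ?_, min v₁ v₂ - max u₁ u₂, sub_pos.2 hgap, ?_⟩⟩
  · exact (union_subset hA₀ hA₁).trans (hcover u₁ u₂ hA₀ hgu₁ hgu₂)
  · exact (union_subset hA₀ hA₁).trans (hcover v₁ v₂ hA₁ hgv₁ hgv₂)
  · intro x hx y hy
    rw [Real.dist_eq, abs_sub_comm]
    exact (sub_le_sub hy.1 hx.2).trans (le_abs_self _)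

section ThreeCycle

variable {f : ℝ → ℝ} {s : Set ℝ} {p q r : ℝ}

lemma exists_sorted_three_cycle_of_lt (hpq : f p = q) (hqr : f q = r) (hrp : f r = p)
    (hp : p ∈ s) (hq : q ∈ s) (hr : r ∈ s) (hq' : p < q) (hr' : p < r) (hne : q ≠ r) :
    ∃ x₁ x₂ x₃, x₁ ∈ s ∧ x₃ ∈ s ∧ x₁ < x₂ ∧ x₂ < x₃ ∧
      ((f x₁ = x₂ ∧ f x₂ = x₃ ∧ f x₃ = x₁) ∨ (f x₁ = x₃ ∧ f x₂ = x₁ ∧ f x₃ = x₂)) := by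
  rcases hne.lt_or_gt with hlt | hgt
  · exact ⟨p, q, r, hp, hr, hq', hlt, Or.inl ⟨hpq, hqr, hrp⟩⟩
  · exact ⟨p, r, q, hp, hq, hr', hgt, Or.inr ⟨hpq, hrp, hqr⟩⟩

lemma exists_sorted_three_cycle (hpq : f p = q) (hqr : f q = r) (hrp : f r = p)
    (hp : p ∈ s) (hq : q ∈ s) (hr : r ∈ s) (h₁ : p ≠ q) (h₂ : q ≠ r) (h₃ : r ≠ p) :
    ∃ x₁ x₂ x₃, x₁ ∈ s ∧ x₃ ∈ s ∧ x₁ < x₂ ∧ x₂ < x₃ ∧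
      ((f x₁ = x₂ ∧ f x₂ = x₃ ∧ f x₃ = x₁) ∨ (f x₁ = x₃ ∧ f x₂ = x₁ ∧ f x₃ = x₂)) := by
  rcases h₁.lt_or_gt with hpq' | hqp'
  · rcases h₃.lt_or_gt with hrp' | hpr'
    · exact exists_sorted_three_cycle_of_lt hrp hpq hqr hr hp hq hrp' (hrp'.trans hpq') h₁
    · exact exists_sorted_three_cycle_of_lt hpq hqr hrp hp hq hr hpq' hpr' h₂
  · rcases h₂.lt_or_gt with hqr' | hrq'
    · exact exists_sorted_three_cycle_of_lt hqr hrp hpq hq hr hp hqr' hqp' h₃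
    · exact exists_sorted_three_cycle_of_lt hrp hpq hqr hr hp hq (hrq'.trans hqp') hrq' h₁

end ThreeCycle

/-- If a continuous map of a compact interval to itself has a periodic point of
(primitive) period 3, then it has positive topological entropy. Equivalently, an
interval map with zero topological entropy has no periodic point of period 3. -/
theorem period_three_positive_entropy (a b : ℝ) (f : ℝ → ℝ)
    (hf : ContinuousOn f (Set.Icc a b))
    (hmaps : Set.MapsTo f (Set.Icc a b) (Set.Icc a b))
    (p : ℝ) (hp : p ∈ Set.Icc a b)
    (h3 : f^[3] p = p) (h1 : f^[1] p ≠ p) (h2 : f^[2] p ≠ p) :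
    0 < coverEntropy f (Set.Icc a b) := by
  have hne : f p ≠ f (f p) := fun h => h2 ((congrArg f h).trans h3)
  obtain ⟨x₁, x₂, x₃, hx₁, hx₃, h₁₂, h₂₃, hcycle⟩ :=
    exists_sorted_three_cycle rfl rfl h3 hp (hmaps hp) (hmaps (hmaps hp)) (Ne.symm h1) hne h2
  have hJ : Icc x₁ x₃ ⊆ Icc a b := Icc_subset_Icc hx₁.1 hx₃.2
  obtain ⟨hL, hR⟩ := Icc_subset_image_iterate_two_of_three_cycle (hf.mono hJ) h₁₂ h₂₃ hcycle
  obtain ⟨A₀, A₁, hA, hhorseshoe⟩ :=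
    exists_isHorseshoe_iterate_two ((hf.iterate hmaps 2).mono hJ) h₁₂ h₂₃ hL hR
  rw [← iterate_mul] at hhorseshoe
  exact hhorseshoe.coverEntropy_pos (hA.trans hJ)
end

section
/- Suppose f is a continuous interval map with zero topological entropy and K is an infinite minimal set for f such that every fiber I_w of the associated binary coding is a single point. Then the sub-flow (K, f|K) is topologically conjugate to the adding machine on Σ = {0,1}^ℕ, and in particular is equicontinuous. -/
open Dynamics

/-- The adding machine on `Σ = {0,1}^ℕ`: binary addition of `1` with carry. -/
def addM (w : ℕ → Bool) : ℕ → Bool :=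
  fun n => xor (w n) (decide (∀ k < n, w k = true))

/-- The adding machine on finite binary words (addition of `1` mod `2ⁿ`). -/
def addW {n : ℕ} (w : Fin n → Bool) : Fin n → Bool :=
  fun k => xor (w k) (decide (∀ j : Fin n, j < k → w j = true))

/-!
The conjugacy is the fiber map `h`, sending `w ∈ Σ` to the point of `⋂ₙ I_{w|n}`. The cells
`I_{w|n}` are compact and decrease to `h w`, so they eventually lie in any ball around it, and by
compactness of `Σ` they do so uniformly in `w`. This makes `h` continuous; disjointness of the
cells of one level makes it injective; and `f(I_v) = I_{v+1}` gives `f ∘ h = h ∘ add`. Since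
`v ↦ v + 1` is a single cycle on the words of length `n`, every cell meets the invariant set `K`,
whence `K` is the range of `h`. Finally, distinct cells of level `n` lie at a positive distance
from each other, so nearby points of `K` share a cell of level `n`, and so do their images
under every iterate of `f`.
-/

open Set Filter Topology Metric Function

theorem addW_cons_false {n : ℕ} (v : Fin n → Bool) :
    addW (Fin.cons false v : Fin (n + 1) → Bool) = Fin.cons true v := by
  funext k
  cases k using Fin.cases <;> simp [addW, Fin.forall_fin_succ]

theorem addW_cons_true {n : ℕ} (v : Fin n → Bool) :
    addW (Fin.cons true v : Fin (n + 1) → Bool) = Fin.cons false (addW v) := by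
  funext k
  cases k using Fin.cases <;> simp [addW, Fin.forall_fin_succ]

theorem semiconj_cons_addW (b : Bool) (n : ℕ) :
    Semiconj (Fin.cons (α := fun _ : Fin (n + 1) => Bool) b) addW addW^[2] := by
  intro v
  cases b <;> simp only [iterate_succ_apply', iterate_zero_apply, addW_cons_false, addW_cons_true]

theorem addW_iterate_two_mul {n : ℕ} (b : Bool) (v : Fin n → Bool) (m : ℕ) :
    addW^[2 * m] (Fin.cons b v : Fin (n + 1) → Bool) = Fin.cons b (addW^[m] v) := by
  rw [iterate_mul, (semiconj_cons_addW b n).iterate_right m]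

theorem exists_iterate_addW_eq {n : ℕ} (v v' : Fin n → Bool) : ∃ m, addW^[m] v = v' := by
  induction n with
  | zero => exact ⟨0, Subsingleton.elim _ _⟩
  | succ n ih =>
    -- clear the lowest bit, move the tail to that of `v'` in steps of two, then set the lowest bit
    obtain ⟨u, k, hk⟩ : ∃ u k, addW^[k] v = Fin.cons false u := by
      rw [← Fin.cons_self_tail v]
      cases v 0
      · exact ⟨_, 0, rfl⟩
      · exact ⟨_, 1, addW_cons_true _⟩
    obtain ⟨m, hm⟩ := ih u (Fin.tail v')
    refine ⟨(v' 0).toNat + (2 * m + k), ?_⟩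
    rw [iterate_add_apply, iterate_add_apply, hk, addW_iterate_two_mul, hm,
      ← Fin.cons_self_tail v']
    cases v' 0 <;> simp [addW_cons_false]

-- `takeBits n w` is the prefix `w|n`, so `J n (takeBits n w)` is the cell `I_{w|n}`.
def takeBits (n : ℕ) (w : ℕ → Bool) : Fin n → Bool := fun k => w k

theorem continuous_takeBits (n : ℕ) : Continuous (takeBits n) :=
  continuous_pi fun _ => continuous_apply _

theorem surjective_takeBits (n : ℕ) : Surjective (takeBits n) :=
  fun v => ⟨fun k => if hk : k < n then v ⟨k, hk⟩ else false, funext fun k => dif_pos k.isLt⟩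

theorem semiconj_takeBits_addM (n : ℕ) : Semiconj (takeBits n) addM addW := by
  intro w
  funext k
  simp only [takeBits, addW, addM]
  congr 1
  exact decide_eq_decide.2 ⟨fun h j hj => h j hj, fun h j hj => h ⟨j, hj.trans k.isLt⟩ hj⟩

theorem Pairwise.eq_of_mem_of_mem {ι α : Type*} {s : ι → Set α} (hs : Pairwise (Disjoint on s))
    {i j : ι} {x : α} (hi : x ∈ s i) (hj : x ∈ s j) : i = j :=
  by_contra fun hij => disjoint_left.1 (hs hij) hi hj

theorem exists_pos_eq_of_dist_lt {X ι : Type*} [MetricSpace X] [Finite ι] {s : ι → Set X}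
    (hs : ∀ i, IsCompact (s i)) (hd : Pairwise (Disjoint on s)) :
    ∃ δ > 0, ∀ i j, ∀ x ∈ s i, ∀ y ∈ s j, dist x y < δ → i = j := by
  have hev : ∀ p : ι × ι, ∀ᶠ δ in 𝓝[>] (0 : ℝ),
      p.1 ≠ p.2 → Disjoint (thickening δ (s p.1)) (thickening δ (s p.2)) := by
    rintro ⟨i, j⟩
    by_cases hij : i = j
    · exact .of_forall fun _ h => (h hij).elim
    obtain ⟨δ, hδ, hdisj⟩ := (hd hij).exists_thickenings (hs i) (hs j).isClosed
    filter_upwards [Ioc_mem_nhdsGT hδ] with δ' hδ' _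
    exact hdisj.mono (thickening_mono hδ'.2 _) (thickening_mono hδ'.2 _)
  obtain ⟨δ, hδ, hpos⟩ := ((eventually_all.2 hev).and self_mem_nhdsWithin).exists
  refine ⟨δ, hpos, fun i j x hx y hy hxy => by_contra fun hij => ?_⟩
  exact disjoint_left.1 (hδ (i, j) hij) (mem_thickening_iff.2 ⟨x, hx, by rwa [dist_comm]⟩)
    (self_subset_thickening hpos _ hy)

section Coding

variable {X : Type*} {J : (n : ℕ) → (Fin n → Bool) → Set X} {h : (ℕ → Bool) → X}

theorem antitone_cell
    (hnest : ∀ n (w : Fin (n + 1) → Bool), J (n + 1) w ⊆ J n (fun k => w k.castSucc))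
    (w : ℕ → Bool) : Antitone fun n => J n (takeBits n w) :=
  antitone_nat_of_succ_le fun n => hnest n (takeBits (n + 1) w)

theorem forall_mem_cell_iff (hh : ∀ w, ⋂ n, J n (takeBits n w) = {h w}) {w : ℕ → Bool}
    {x : X} : (∀ n, x ∈ J n (takeBits n w)) ↔ x = h w := by
  rw [← mem_iInter, hh w, mem_singleton_iff]

theorem mem_cell (hh : ∀ w, ⋂ n, J n (takeBits n w) = {h w}) (w : ℕ → Bool) (n : ℕ) :
    h w ∈ J n (takeBits n w) :=
  (forall_mem_cell_iff hh).2 rfl n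

theorem injective_of_iInter_cell_eq (hdisj : ∀ n, Pairwise (Disjoint on J n))
    (hh : ∀ w, ⋂ n, J n (takeBits n w) = {h w}) : Injective h := by
  intro w w' hww'
  funext k
  have hcell := (hdisj (k + 1)).eq_of_mem_of_mem (mem_cell hh w (k + 1))
    (hww' ▸ mem_cell hh w' (k + 1))
  exact congrFun hcell ⟨k, k.lt_succ_self⟩

theorem exists_eq_of_mem_iInter_iUnion
    (hnest : ∀ n (w : Fin (n + 1) → Bool), J (n + 1) w ⊆ J n (fun k => w k.castSucc))
    (hdisj : ∀ n, Pairwise (Disjoint on J n)) (hh : ∀ w, ⋂ n, J n (takeBits n w) = {h w})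
    {x : X} (hx : x ∈ ⋂ n, ⋃ v, J n v) : ∃ w, h w = x := by
  have hcell : ∀ n, ∃ w, x ∈ J n (takeBits n w) := fun n => by
    obtain ⟨v, hv⟩ := mem_iUnion.1 (mem_iInter.1 hx n)
    obtain ⟨w, rfl⟩ := surjective_takeBits n v
    exact ⟨w, hv⟩
  choose W hW using hcell
  have hcompat {m n : ℕ} (hnm : n ≤ m) : takeBits n (W m) = takeBits n (W n) :=
    (hdisj n).eq_of_mem_of_mem (antitone_cell hnest (W m) hnm (hW m)) (hW n)
  refine ⟨fun k => W (k + 1) k, ((forall_mem_cell_iff hh).1 fun n => ?_).symm⟩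
  convert hW n using 2
  funext k
  exact (congrFun (hcompat k.isLt) ⟨k, Nat.lt_succ_self k⟩).symm

theorem semiconj_of_iInter_cell_eq {f : X → X} (hcyc : ∀ n w, f '' J n w = J n (addW w))
    (hh : ∀ w, ⋂ n, J n (takeBits n w) = {h w}) : Semiconj h addM f := fun w =>
  ((forall_mem_cell_iff hh).1 fun n => by
    rw [semiconj_takeBits_addM n w, ← hcyc]
    exact mem_image_of_mem f (mem_cell hh w n)).symm

theorem image_iterate_cell {f : X → X} (hcyc : ∀ n w, f '' J n w = J n (addW w)) (m n : ℕ)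
    (v : Fin n → Bool) : f^[m] '' J n v = J n (addW^[m] v) := by
  rw [image_iterate_eq]
  exact ((Semiconj.iterate_right (f := J n) (fun v => (hcyc n v).symm) m) v).symm

theorem inter_cell_nonempty {f : X → X} {K : Set X} (hcyc : ∀ n w, f '' J n w = J n (addW w))
    (hK : K.Nonempty) (hKinv : MapsTo f K K) (hKsub : K ⊆ ⋂ n, ⋃ v, J n v) (n : ℕ)
    (v : Fin n → Bool) : (K ∩ J n v).Nonempty := by
  obtain ⟨x, hx⟩ := hK
  obtain ⟨u, hu⟩ := mem_iUnion.1 (mem_iInter.1 (hKsub hx) n)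
  obtain ⟨m, rfl⟩ := exists_iterate_addW_eq u v
  exact ⟨f^[m] x, hKinv.iterate m hx, image_iterate_cell hcyc m n u ▸ mem_image_of_mem _ hu⟩

variable [MetricSpace X]

theorem exists_cell_subset_ball (hcomp : ∀ n w, IsCompact (J n w))
    (hnest : ∀ n (w : Fin (n + 1) → Bool), J (n + 1) w ⊆ J n (fun k => w k.castSucc))
    (hh : ∀ w, ⋂ n, J n (takeBits n w) = {h w}) (w : ℕ → Bool) {ε : ℝ} (hε : 0 < ε) :
    ∃ n, J n (takeBits n w) ⊆ ball (h w) ε :=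
  exists_subset_nhds_of_isCompact' (antitone_cell hnest w).directed_ge (fun n => hcomp n _)
    (fun n => (hcomp n _).isClosed) (by rw [hh w]; rintro _ rfl; exact ball_mem_nhds _ hε)

theorem exists_forall_cell_subset_ball (hcomp : ∀ n w, IsCompact (J n w))
    (hnest : ∀ n (w : Fin (n + 1) → Bool), J (n + 1) w ⊆ J n (fun k => w k.castSucc))
    (hh : ∀ w, ⋂ n, J n (takeBits n w) = {h w}) {ε : ℝ} (hε : 0 < ε) :
    ∃ n, ∀ w, J n (takeBits n w) ⊆ ball (h w) ε := by
  choose N hN using fun w => exists_cell_subset_ball hcomp hnest hh w (half_pos hε)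
  obtain ⟨t, ht⟩ := isCompact_univ.elim_finite_subcover
    (fun w => takeBits (N w) ⁻¹' {takeBits (N w) w})
    (fun w => (isOpen_discrete _).preimage (continuous_takeBits _))
    (fun w _ => mem_iUnion.2 ⟨w, rfl⟩)
  refine ⟨t.sup N, fun w' x hx => ?_⟩
  obtain ⟨w, hwt, hw'⟩ := mem_iUnion₂.1 (ht (mem_univ w'))
  have hsub : J (t.sup N) (takeBits _ w') ⊆ J (N w) (takeBits (N w) w) :=
    hw' ▸ antitone_cell hnest w' (Finset.le_sup hwt)
  calc dist x (h w') ≤ dist x (h w) + dist (h w') (h w) := dist_triangle_right _ _ _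
    _ < ε / 2 + ε / 2 := add_lt_add (hN w (hsub hx)) (hN w (hsub (mem_cell hh w' _)))
    _ = ε := add_halves ε

theorem continuous_of_iInter_cell_eq (hcomp : ∀ n w, IsCompact (J n w))
    (hnest : ∀ n (w : Fin (n + 1) → Bool), J (n + 1) w ⊆ J n (fun k => w k.castSucc))
    (hh : ∀ w, ⋂ n, J n (takeBits n w) = {h w}) : Continuous h := by
  refine continuous_iff_continuousAt.2 fun w => Metric.tendsto_nhds.2 fun ε hε => ?_
  obtain ⟨n, hn⟩ := exists_cell_subset_ball hcomp hnest hh w hε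
  filter_upwards [(continuous_takeBits n).continuousAt.preimage_mem_nhds
    ((isOpen_discrete {takeBits n w}).mem_nhds rfl)] with w' hw'
  exact hn (hw' ▸ mem_cell hh w' n)

theorem mem_of_inter_cell_nonempty (hcomp : ∀ n w, IsCompact (J n w))
    (hnest : ∀ n (w : Fin (n + 1) → Bool), J (n + 1) w ⊆ J n (fun k => w k.castSucc))
    (hh : ∀ w, ⋂ n, J n (takeBits n w) = {h w}) {K : Set X} (hKcl : IsClosed K)
    (hKJ : ∀ n v, (K ∩ J n v).Nonempty) (w : ℕ → Bool) : h w ∈ K :=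
  hKcl.closure_subset <| Metric.mem_closure_iff.2 fun ε hε => by
    obtain ⟨n, hn⟩ := exists_cell_subset_ball hcomp hnest hh w hε
    obtain ⟨y, hyK, hy⟩ := hKJ n (takeBits n w)
    exact ⟨y, hyK, mem_ball'.1 (hn hy)⟩

theorem dist_iterate_lt_of_iInter_cell_eq {f : X → X} (hcomp : ∀ n w, IsCompact (J n w))
    (hnest : ∀ n (w : Fin (n + 1) → Bool), J (n + 1) w ⊆ J n (fun k => w k.castSucc))
    (hdisj : ∀ n, Pairwise (Disjoint on J n)) (hh : ∀ w, ⋂ n, J n (takeBits n w) = {h w})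
    (hf : Semiconj h addM f) {ε : ℝ} (hε : 0 < ε) :
    ∃ δ > 0, ∀ w w', dist (h w) (h w') < δ → ∀ m, dist (f^[m] (h w)) (f^[m] (h w')) < ε := by
  obtain ⟨n, hn⟩ := exists_forall_cell_subset_ball hcomp hnest hh hε
  obtain ⟨δ, hδ, hsep⟩ := exists_pos_eq_of_dist_lt (hcomp n) (hdisj n)
  refine ⟨δ, hδ, fun w w' hww' m => ?_⟩
  have hpre : takeBits n w = takeBits n w' :=
    hsep _ _ _ (mem_cell hh w n) _ (mem_cell hh w' n) hww'
  have hpre_m : takeBits n (addM^[m] w') = takeBits n (addM^[m] w) := by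
    rw [(semiconj_takeBits_addM n).iterate_right m, (semiconj_takeBits_addM n).iterate_right m,
      hpre]
  rw [← hf.iterate_right m, ← hf.iterate_right m, dist_comm]
  exact hn _ (hpre_m ▸ mem_cell hh (addM^[m] w') n)

end Coding

theorem singleton_fibers_conjugate_adding_machine_general (f : ℝ → ℝ)
    (K : Set ℝ) (hKinf : K.Infinite) (hKcl : IsClosed K)
    (hKinv : Set.MapsTo f K K)
    -- the associated binary coding by nested families of closed intervals:
    (J : (n : ℕ) → (Fin n → Bool) → Set ℝ)
    (hcomp : ∀ n (w : Fin n → Bool), IsCompact (J n w))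
    (hdisj : ∀ n (w w' : Fin n → Bool), w ≠ w' → Disjoint (J n w) (J n w'))
    (hnest : ∀ n (w : Fin (n + 1) → Bool), J (n + 1) w ⊆ J n (fun k => w k.castSucc))
    (hcyc : ∀ n (w : Fin n → Bool), f '' J n w = J n (addW w))
    (hKsub : K ⊆ ⋂ n : ℕ, ⋃ w : Fin n → Bool, J n w)
    -- every fiber `I_w` is a single point:
    (hsing : ∀ w : ℕ → Bool, ∃ x : ℝ, (⋂ n : ℕ, J n (fun k : Fin n => w k)) = {x}) :
    (∃ h : (ℕ → Bool) → ℝ, Continuous h ∧ Function.Injective h ∧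
        Set.range h = K ∧ ∀ w : ℕ → Bool, f (h w) = h (addM w)) ∧
      ∀ ε > (0 : ℝ), ∃ δ > (0 : ℝ), ∀ u ∈ K, ∀ v ∈ K, |u - v| < δ →
        ∀ n : ℕ, |f^[n] u - f^[n] v| < ε := by
  choose h hh using hsing
  have hpairwise : ∀ n, Pairwise (Disjoint on J n) := fun n w w' => hdisj n w w'
  have hsemi : Semiconj h addM f := semiconj_of_iInter_cell_eq hcyc hh
  have hrange : range h = K := by
    refine (range_subset_iff.2 <| mem_of_inter_cell_nonempty hcomp hnest hh hKcl <|
      inter_cell_nonempty hcyc hKinf.nonempty hKinv hKsub).antisymm fun x hx => ?_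
    exact exists_eq_of_mem_iInter_iUnion hnest hpairwise hh (hKsub hx)
  refine ⟨⟨h, continuous_of_iInter_cell_eq hcomp hnest hh, injective_of_iInter_cell_eq hpairwise hh,
    hrange, fun w => (hsemi w).symm⟩, fun ε hε => ?_⟩
  obtain ⟨δ, hδ, hδε⟩ := dist_iterate_lt_of_iInter_cell_eq hcomp hnest hpairwise hh hsemi hε
  refine ⟨δ, hδ, ?_⟩
  rw [← hrange]
  rintro _ ⟨w, rfl⟩ _ ⟨w', rfl⟩ hww' m
  simpa only [Real.dist_eq] using hδε w w' (by rwa [Real.dist_eq]) m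

/-- Suppose `f` is a continuous interval map with zero topological entropy and `K` an
infinite minimal set such that every fiber `I_w` of the associated binary coding is a
single point. Then `(K, f|K)` is topologically conjugate to the adding machine on
`Σ = {0,1}^ℕ`, and in particular equicontinuous. -/
theorem singleton_fibers_conjugate_adding_machine (a b : ℝ) (f : ℝ → ℝ)
    (hf : ContinuousOn f (Set.Icc a b))
    (hmaps : Set.MapsTo f (Set.Icc a b) (Set.Icc a b))
    (hent : coverEntropy f (Set.Icc a b) = 0)
    (K : Set ℝ) (hK : K ⊆ Set.Icc a b) (hKinf : K.Infinite) (hKcl : IsClosed K)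
    (hKinv : Set.MapsTo f K K)
    (hmin : ∀ x ∈ K, K ⊆ closure (Set.range fun n : ℕ => f^[n] x))
    -- the associated binary coding by nested families of closed intervals:
    (J : (n : ℕ) → (Fin n → Bool) → Set ℝ)
    (hsub : ∀ n (w : Fin n → Bool), J n w ⊆ Set.Icc a b)
    (hne : ∀ n (w : Fin n → Bool), (J n w).Nonempty)
    (hcomp : ∀ n (w : Fin n → Bool), IsCompact (J n w))
    (hconn : ∀ n (w : Fin n → Bool), (J n w).OrdConnected)
    (hdisj : ∀ n (w w' : Fin n → Bool), w ≠ w' → Disjoint (J n w) (J n w'))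
    (hnest : ∀ n (w : Fin (n + 1) → Bool), J (n + 1) w ⊆ J n (fun k => w k.castSucc))
    (hcyc : ∀ n (w : Fin n → Bool), f '' J n w = J n (addW w))
    (hKsub : K ⊆ ⋂ n : ℕ, ⋃ w : Fin n → Bool, J n w)
    -- every fiber `I_w` is a single point:
    (hsing : ∀ w : ℕ → Bool, ∃ x : ℝ, (⋂ n : ℕ, J n (fun k : Fin n => w k)) = {x}) :
    (∃ h : (ℕ → Bool) → ℝ, Continuous h ∧ Function.Injective h ∧
        Set.range h = K ∧ ∀ w : ℕ → Bool, f (h w) = h (addM w)) ∧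
      ∀ ε > (0 : ℝ), ∃ δ > (0 : ℝ), ∀ u ∈ K, ∀ v ∈ K, |u - v| < δ →
        ∀ n : ℕ, |f^[n] u - f^[n] v| < ε :=
  singleton_fibers_conjugate_adding_machine_general f K hKinf hKcl hKinv J hcomp hdisj hnest hcyc
    hKsub hsing
end
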